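/- Let (Γ, t) be a linear lambda term and let u be a subterm occurrence of t that is the function or the argument of an application occurring in t. Then the edge corresponding to u in the underlying rooted trivalent map of the lambda lifting of (Γ, t) is a bridge if and only if u is closed (has no free variables). Moreover, every bridge of the underlying rooted trivalent map of the lambda lifting arises in this way. -/

import Mathlib

/-! ## Lambda terms and linearity -/

inductive Term : Type
  | var : ℕ → Term
  | app : Term → Term → Term
  | lam : ℕ → Term → Term
deriving DecidableEq

namespace Term

/-- total number of applications and abstractions -/
def size : Term → ℕ
  | var _ => 0
  | app t u => size t + size u + 1
  | lam _ t => size t + 1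

def apps : Term → ℕ
  | var _ => 0
  | app t u => apps t + apps u + 1
  | lam _ t => apps t

def lams : Term → ℕ
  | var _ => 0
  | app t u => lams t + lams u
  | lam _ t => lams t + 1

/-- all variable names occurring in a term (free, bound or binding) -/
def varsList : Term → List ℕ
  | var z => [z]
  | app t u => varsList t ++ varsList u
  | lam z t => z :: varsList t

/-- the list of free variables -/
def freeList : Term → List ℕ
  | var z => [z]
  | app t u => freeList t ++ freeList u
  | lam z t => (freeList t).filter (fun y => y ≠ z)

/-- the list of bound (binder) variables -/
def boundVars : Term → List ℕ
  | var _ => []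
  | app t u => boundVars t ++ boundVars u
  | lam z t => z :: boundVars t

/-- rename the free occurrences of `x` to `y` -/
def rename (x y : ℕ) : Term → Term
  | var z => if z = x then var y else var z
  | app t u => app (rename x y t) (rename x y u)
  | lam z t => if z = x then lam z t else lam z (rename x y t)

/-- substitution of `u` for the free occurrences of `x` -/
def subst (u : Term) (x : ℕ) : Term → Term
  | var z => if z = x then u else var z
  | app t₁ t₂ => app (subst u x t₁) (subst u x t₂)
  | lam z t => if z = x then lam z t else lam z (subst u x t)

end Term

/-- the linearity relation `Γ ⊢ t` between contexts and lambda terms -/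
inductive Linear : List ℕ → Term → Prop
  | var (x : ℕ) : Linear [x] (.var x)
  | app {Γ Δ : List ℕ} {t u : Term} : Linear Γ t → Linear Δ u →
      (Γ ++ Δ).Nodup → Linear (Γ ++ Δ) (.app t u)
  | lam {Γ : List ℕ} {x : ℕ} {t : Term} : Linear (Γ ++ [x]) t → Linear Γ (.lam x t)
  | exch {Γ Δ : List ℕ} {x y : ℕ} {t : Term} :
      Linear (Γ ++ y :: x :: Δ) t → Linear (Γ ++ x :: y :: Δ) t

/-! ## Combinatorial maps -/

/-- the data of a candidate rooted trivalent map with boundary: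
a set of darts with functions `v`, `e`, a root dart and a boundary list -/
structure PreMap : Type 1 where
  carrier : Type
  v : carrier → carrier
  e : carrier → carrier
  root : carrier
  boundary : List carrier

/-- `M` is a rooted trivalent map with boundary: `v` and `e` generate a
transitive action of `Γ₃ = ⟨v, e ∣ v³ = e² = 1⟩`, the fixed points of `v` are
exactly the root and the fixed points of `e` are exactly the boundary. -/
structure IsRTMapB (M : PreMap) : Prop where
  v_cube : ∀ x, M.v (M.v (M.v x)) = x
  e_sq : ∀ x, M.e (M.e x) = x
  trans : ∀ x y, Relation.EqvGen (fun a b => M.v a = b ∨ M.e a = b) x y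
  v_fix : ∀ x, M.v x = x ↔ x = M.root
  e_fix : ∀ x, M.e x = x ↔ x ∈ M.boundary
  nodup : M.boundary.Nodup

/-- isomorphism of rooted maps with boundary -/
def MapIso (M M' : PreMap) : Prop :=
  ∃ h : M.carrier ≃ M'.carrier,
    (∀ x, h (M.v x) = M'.v (h x)) ∧ (∀ x, h (M.e x) = M'.e (h x)) ∧
    h M.root = M'.root ∧ M.boundary.map h = M'.boundary

/-! ## The underlying rooted trivalent map of a linear lambda term -/

namespace Term

/-- the subterm at a given position (`false` = function/body child, `true` = argument) -/
def sub? : Term → List Bool → Option Term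
  | t, [] => some t
  | .app t _, false :: p => sub? t p
  | .app _ u, true :: p => sub? u p
  | .lam _ t, false :: p => sub? t p
  | _, _ => none

/-- positions of the application and abstraction nodes of a term -/
def nodes : Term → List (List Bool)
  | .var _ => []
  | .app t u => [] :: ((nodes t).map (false :: ·) ++ (nodes u).map (true :: ·))
  | .lam _ t => [] :: (nodes t).map (false :: ·)

/-- all positions of subterm occurrences -/
def allPos : Term → List (List Bool)
  | .var _ => [[]]
  | .app t u => [] :: ((allPos t).map (false :: ·) ++ (allPos u).map (true :: ·))
  | .lam _ t => [] :: (allPos t).map (false :: ·)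

def isLamOf (t : Term) (x : ℕ) (p : List Bool) : Bool :=
  match sub? t p with
  | some (.lam y _) => y == x
  | _ => false

/-- the position of the binder of the variable occurrence at position `q`
(`none` if that occurrence is free, or if there is no variable there) -/
def binderPos (t : Term) (q : List Bool) : Option (List Bool) :=
  match sub? t q with
  | some (.var x) =>
      (((List.range q.length).map (fun i => q.take i)).reverse).find? (isLamOf t x)
  | _ => none

/-! Dart indices: `0` is the dart of the root vertex, and `1 + 3*j + i` is
port `i` of the `j`-th node (around an application node, ports `0,1,2` are
function, argument, continuation; around an abstraction node they are
body, parameter, root). -/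

/-- the dart at the lower end of the wire of the subterm occurrence at `p` -/
def dnIdx (t : Term) (p : List Bool) : ℕ :=
  match p.getLast? with
  | none => 0
  | some d =>
    let q := p.dropLast
    let port : ℕ :=
      match sub? t q with
      | some (.app _ _) => if d then 1 else 0
      | _ => 0
    1 + 3 * ((nodes t).idxOf q) + port

/-- the dart at the upper end of the wire of the subterm occurrence at `p` -/
def topIdx (t : Term) (p : List Bool) : ℕ :=
  match sub? t p with
  | some (.var _) =>
      match binderPos t p with
      | some q => 1 + 3 * ((nodes t).idxOf q) + 1
      | none => dnIdx t p
  | some _ => 1 + 3 * ((nodes t).idxOf p) + 2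
  | none => 0

/-- the position of the occurrence of the variable `x` bound by the abstraction at `p` -/
def occOf (t : Term) (p : List Bool) (x : ℕ) : Option (List Bool) :=
  (allPos t).find? (fun q => decide (sub? t q = some (.var x) ∧ binderPos t q = some p))

/-- the position of the free occurrence of the variable `x` -/
def freeOcc (t : Term) (x : ℕ) : Option (List Bool) :=
  (allPos t).find? (fun q => decide (sub? t q = some (.var x) ∧ binderPos t q = none))

/-- the edge involution on dart indices -/
def eIdx (t : Term) (d : ℕ) : ℕ :=
  if d = 0 then topIdx t []
  else
    let j := (d - 1) / 3
    let i := (d - 1) % 3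
    match (nodes t)[j]? with
    | none => d
    | some p =>
      match sub? t p with
      | some (.app _ _) =>
          if i = 0 then topIdx t (p ++ [false])
          else if i = 1 then topIdx t (p ++ [true])
          else dnIdx t p
      | some (.lam x _) =>
          if i = 0 then topIdx t (p ++ [false])
          else if i = 1 then
            match occOf t p x with
            | some q => dnIdx t q
            | none => d
          else dnIdx t p
      | _ => d

end Term

/-- the underlying rooted trivalent map (with boundary) of a linear lambda
term `(Γ, t)`: application and abstraction nodes become trivalent vertices
(with the counterclockwise ordering of ports fixed by the convention above),
a univalent vertex (dart `0`) is attached at the end of the outgoing root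
wire, and the darts of the dangling input wires, in the order of the context
`Γ`, form the boundary. -/
def underlying (Γ : List ℕ) (t : Term) : PreMap where
  carrier := Fin (3 * (Term.nodes t).length + 1)
  v := fun d =>
    if d.val = 0 then d
    else ⟨(1 + 3 * ((d.val - 1) / 3) + ((d.val - 1) % 3 + 2) % 3) %
            (3 * (Term.nodes t).length + 1), Nat.mod_lt _ (by omega)⟩
  e := fun d => ⟨Term.eIdx t d.val % (3 * (Term.nodes t).length + 1),
                 Nat.mod_lt _ (by omega)⟩
  root := ⟨0, by omega⟩
  boundary := Γ.map (fun x =>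
    ⟨(match Term.freeOcc t x with
      | some q => Term.dnIdx t q
      | none => 0) % (3 * (Term.nodes t).length + 1), Nat.mod_lt _ (by omega)⟩)

/-! ## Bridges -/

/-- connectivity of the darts `a`, `b` avoiding the edge `{x, e x}` -/
def EdgeConn (M : PreMap) (x : M.carrier) (a b : M.carrier) : Prop :=
  Relation.EqvGen (fun u w => M.v u = w ∨ (M.e u = w ∧ u ≠ x ∧ u ≠ M.e x)) a b

/-- the edge `{x, e x}` is a bridge: it is a real edge, it is not the edge
incident to the root vertex, and its removal disconnects the underlying graph -/
def IsBridge (M : PreMap) (x : M.carrier) : Prop :=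
  M.e x ≠ x ∧ x ≠ M.root ∧ x ≠ M.e M.root ∧ ¬ ∀ a b, EdgeConn M x a b

def Bridgeless (M : PreMap) : Prop := ∀ x, ¬ IsBridge M x


/-- the lambda lifting `λx₁[⋯ λx_k[t] ⋯]` of a linear lambda term `(Γ, t)` -/
def lambdaLift (Γ : List ℕ) (t : Term) : Term := Γ.foldr Term.lam t

/-- the dart at the lower end of the wire of the subterm occurrence at
position `P`, as an element of the underlying map -/
def dartOf (Γ : List ℕ) (t : Term) (P : List Bool) : (underlying Γ t).carrier :=
  ⟨Term.dnIdx t P % (3 * (Term.nodes t).length + 1), Nat.mod_lt _ (by omega)⟩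

/-!
Work in the closed term `T = λΓ.t`. Every dart of its underlying map is one end of the wire of a
subterm occurrence `p`: the lower end `dartOf p` is a port of the parent node (the root dart if
`p = []`), the upper end `topDart p` is the root port of the node at `p`, or the parameter port
of the binder when `p` is a variable; `e` swaps the two ends.

If the subterm at `P` is closed, the darts of the nodes at or below `P` are closed under `v` and
under every wire other than that of `P`, since every variable occurring inside the closed
subterm is bound inside it. This set contains the upper end of `P` but not the root, so the wire
of `P` is a bridge.

If the subterm at `P` has a free variable, its binder lies strictly above `P`. Without the wire
of `P`, every node is still joined to the root, by induction on depth: a node other than `P`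
through the wire to its parent, and `P` itself by descending to an occurrence of that variable
and following its wire up to the binder. In particular the body of an abstraction, which
contains the bound variable, never carries a bridge.
-/

namespace Term

theorem sub?_nil (t : Term) : sub? t [] = some t := by cases t <;> rfl

theorem sub?_append (t : Term) (p q : List Bool) :
    sub? t (p ++ q) = (sub? t p).bind (sub? · q) := by
  induction p generalizing t with
  | nil => simp [sub?_nil]
  | cons c p ih => cases t <;> cases c <;> simp [sub?, ih]

theorem sub?_append_of_eq {t u : Term} {p : List Bool} (h : sub? t p = some u) (q : List Bool) :
    sub? t (p ++ q) = sub? u q := by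
  rw [sub?_append, h, Option.bind_some]

theorem sub?_app_left {t a b : Term} {q : List Bool} (hq : sub? t q = some (app a b)) :
    sub? t (q ++ [false]) = some a := by
  rw [sub?_append_of_eq hq]; simp [sub?, sub?_nil]

theorem sub?_app_right {t a b : Term} {q : List Bool} (hq : sub? t q = some (app a b)) :
    sub? t (q ++ [true]) = some b := by
  rw [sub?_append_of_eq hq]; simp [sub?, sub?_nil]

theorem sub?_lam_body {t b : Term} {q : List Bool} {z : ℕ} (hq : sub? t q = some (lam z b)) :
    sub? t (q ++ [false]) = some b := by
  rw [sub?_append_of_eq hq]; simp [sub?, sub?_nil]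

theorem sub?_var {z : ℕ} {p : List Bool} {u : Term} (h : sub? (var z) p = some u) :
    p = [] ∧ u = var z := by
  cases p with
  | nil => exact ⟨rfl, (Option.some.inj h).symm⟩
  | cons c p => cases c <;> simp [sub?] at h

theorem mem_allPos {t : Term} {p : List Bool} : p ∈ allPos t ↔ ∃ u, sub? t p = some u := by
  induction t generalizing p with
  | var z => cases p with
    | nil => simp [allPos, sub?]
    | cons c p => cases c <;> simp [allPos, sub?]
  | app a b iha ihb => cases p with
    | nil => simp [allPos, sub?]
    | cons c p => cases c <;> simp [allPos, sub?, iha, ihb]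
  | lam z b ih => cases p with
    | nil => simp [allPos, sub?]
    | cons c p => cases c <;> simp [allPos, sub?, ih]

theorem mem_nodes {t : Term} {p : List Bool} :
    p ∈ nodes t ↔ ∃ u, sub? t p = some u ∧ ∀ y, u ≠ var y := by
  induction t generalizing p with
  | var z => cases p with
    | nil => simp [nodes, sub?]
    | cons c p => cases c <;> simp [nodes, sub?]
  | app a b iha ihb => cases p with
    | nil => simp [nodes, sub?]
    | cons c p => cases c <;> simp [nodes, sub?, iha, ihb]
  | lam z b ih => cases p with
    | nil => simp [nodes, sub?]
    | cons c p => cases c <;> simp [nodes, sub?, ih]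

theorem nodes_nodup (t : Term) : (nodes t).Nodup := by
  induction t with
  | var z => simp [nodes]
  | app a b iha ihb =>
    simp only [nodes, List.nodup_cons, List.nodup_append]
    refine ⟨by simp, iha.map (List.cons_injective), ihb.map (List.cons_injective), ?_⟩
    simp
  | lam z b ihb => simpa [nodes] using ihb.map List.cons_injective

theorem parent_of_sub?_concat {t u : Term} {q : List Bool} {d : Bool}
    (h : sub? t (q ++ [d]) = some u) :
    (∃ a b, sub? t q = some (app a b)) ∨ (∃ z, sub? t q = some (lam z u) ∧ d = false) := by
  rw [sub?_append] at h
  cases hq : sub? t q with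
  | none => simp [hq] at h
  | some w =>
    rw [hq, Option.bind_some] at h
    cases w with
    | var z => cases d <;> simp [sub?] at h
    | app a b => exact Or.inl ⟨a, b, rfl⟩
    | lam z b => cases d <;> simp_all [sub?]

theorem parent_mem_nodes {t u : Term} {q : List Bool} {d : Bool}
    (h : sub? t (q ++ [d]) = some u) : q ∈ nodes t := by
  rcases parent_of_sub?_concat h with ⟨a, b, hq⟩ | ⟨z, hq, -⟩ <;>
    exact mem_nodes.mpr ⟨_, hq, by simp⟩


/-- the longest proper prefix of `q` at which `t` has an abstraction of `y` -/
def innermostLam (t : Term) (y : ℕ) (q : List Bool) : Option (List Bool) :=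
  (((List.range q.length).map (fun i => q.take i)).reverse).find? (isLamOf t y)

theorem binderPos_eq_innermostLam {t : Term} {q : List Bool} {y : ℕ}
    (h : sub? t q = some (var y)) : binderPos t q = innermostLam t y q := by
  simp only [binderPos, h, innermostLam]

theorem isLamOf_iff {t : Term} {y : ℕ} {s : List Bool} :
    isLamOf t y s = true ↔ ∃ b, sub? t s = some (lam y b) := by
  unfold isLamOf
  cases sub? t s with
  | none => simp
  | some w =>
    cases w with
    | lam z b => exact ⟨fun h => ⟨b, by simpa using h⟩, fun ⟨_, h⟩ => by simp_all⟩
    | _ => simp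

theorem innermostLam_eq_some {t : Term} {y : ℕ} {P s : List Bool}
    (h : innermostLam t y P = some s) :
    s <+: P ∧ s.length < P.length ∧ ∃ b, sub? t s = some (lam y b) := by
  have hmem := List.mem_of_find?_eq_some h
  simp only [List.mem_reverse, List.mem_map, List.mem_range] at hmem
  obtain ⟨i, hi, rfl⟩ := hmem
  exact ⟨List.take_prefix _ _, by simpa using Nat.min_le_left i P.length |>.trans_lt hi,
    isLamOf_iff.mp (List.find?_some h)⟩

theorem innermostLam_append {t u : Term} {P : List Bool} (h : sub? t P = some u) (y : ℕ)
    (r : List Bool) :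
    innermostLam t y (P ++ r) = ((innermostLam u y r).map (P ++ ·)).or (innermostLam t y P) := by
  have hprefixes : ((List.range (P ++ r).length).map (fun i => (P ++ r).take i)).reverse
      = (((List.range r.length).map (fun i => r.take i)).map (P ++ ·)).reverse
        ++ ((List.range P.length).map (fun i => P.take i)).reverse := by
    rw [← List.reverse_append, List.length_append, List.range_add, List.map_append,
      List.map_map, List.map_map]
    congr 2
    · exact List.map_congr_left fun i hi =>
        List.take_append_of_le_length (List.mem_range.mp hi).le
    · exact List.map_congr_left fun i _ => List.take_length_add_append i
  have hshift : isLamOf t y ∘ (P ++ ·) = isLamOf u y := by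
    funext s
    simp only [Function.comp, isLamOf, sub?_append_of_eq h]
  rw [innermostLam, hprefixes, List.find?_append, ← List.map_reverse, List.find?_map, hshift]
  rfl

theorem innermostLam_cons {t tc : Term} {c : Bool} (hc : sub? t [c] = some tc) (y : ℕ)
    (r : List Bool) :
    innermostLam t y (c :: r) =
      ((innermostLam tc y r).map (c :: ·)).or (if isLamOf t y [] then some [] else none) := by
  simpa [innermostLam, List.find?] using innermostLam_append hc y r

def IsFreeOcc (u : Term) (y : ℕ) (r : List Bool) : Prop :=
  sub? u r = some (var y) ∧ innermostLam u y r = none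

@[simp] theorem isFreeOcc_nil {u : Term} {y : ℕ} : IsFreeOcc u y [] ↔ u = var y := by
  simp [IsFreeOcc, sub?_nil, innermostLam]

@[simp] theorem isFreeOcc_app_false {a b : Term} {y : ℕ} {r : List Bool} :
    IsFreeOcc (app a b) y (false :: r) ↔ IsFreeOcc a y r := by
  simp [IsFreeOcc, sub?, innermostLam_cons (sub?_app_left (sub?_nil _)), isLamOf]

@[simp] theorem isFreeOcc_app_true {a b : Term} {y : ℕ} {r : List Bool} :
    IsFreeOcc (app a b) y (true :: r) ↔ IsFreeOcc b y r := by
  simp [IsFreeOcc, sub?, innermostLam_cons (sub?_app_right (sub?_nil _)), isLamOf]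

@[simp] theorem isFreeOcc_lam_false {z y : ℕ} {b : Term} {r : List Bool} :
    IsFreeOcc (lam z b) y (false :: r) ↔ IsFreeOcc b y r ∧ z ≠ y := by
  simp only [IsFreeOcc, sub?, innermostLam_cons (sub?_lam_body (sub?_nil _)), isLamOf,
    beq_iff_eq]
  by_cases hz : z = y <;> simp [hz]

@[simp] theorem isFreeOcc_lam_true {z y : ℕ} {b : Term} {r : List Bool} :
    ¬ IsFreeOcc (lam z b) y (true :: r) := by
  simp [IsFreeOcc, sub?]

@[simp] theorem isFreeOcc_var_cons {z y : ℕ} {c : Bool} {r : List Bool} :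
    ¬ IsFreeOcc (var z) y (c :: r) := by
  cases c <;> simp [IsFreeOcc, sub?]

theorem mem_freeList_iff {u : Term} {y : ℕ} : y ∈ freeList u ↔ ∃ r, IsFreeOcc u y r := by
  induction u with
  | var z =>
    constructor
    · intro h
      simp only [freeList, List.mem_singleton] at h
      exact ⟨[], by simp [h]⟩
    · rintro ⟨_ | ⟨c, r⟩, h⟩ <;> simp_all [freeList]
  | app a b iha ihb =>
    constructor
    · intro h
      rcases List.mem_append.mp h with h | h
      · obtain ⟨r, hr⟩ := iha.mp h; exact ⟨false :: r, by simpa using hr⟩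
      · obtain ⟨r, hr⟩ := ihb.mp h; exact ⟨true :: r, by simpa using hr⟩
    · rintro ⟨_ | ⟨_ | _, r⟩, h⟩
      · simp at h
      · exact List.mem_append_left _ (iha.mpr ⟨r, by simpa using h⟩)
      · exact List.mem_append_right _ (ihb.mpr ⟨r, by simpa using h⟩)
  | lam z b ih =>
    simp only [freeList, List.mem_filter, ih, ne_eq, decide_eq_true_eq]
    constructor
    · rintro ⟨⟨r, hr⟩, hyz⟩; exact ⟨false :: r, by simpa [hr] using Ne.symm hyz⟩
    · rintro ⟨_ | ⟨_ | _, r⟩, h⟩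
      · simp at h
      · simp only [isFreeOcc_lam_false] at h; exact ⟨⟨r, h.1⟩, Ne.symm h.2⟩
      · simp at h

end Term

namespace Linear

variable {Γ : List ℕ} {t : Term}

theorem nodup (h : Linear Γ t) : Γ.Nodup := by
  induction h with
  | var x => exact List.nodup_singleton x
  | app _ _ hnd => exact hnd
  | lam _ ih => exact (List.nodup_append.mp ih).1
  | exch _ ih => exact ih.perm (List.Perm.append_left _ (List.Perm.swap _ _ _))

theorem freeList_perm (h : Linear Γ t) : t.freeList.Perm Γ := by
  induction h with
  | var x => rfl
  | app _ _ _ iht ihu => exact iht.append ihu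
  | @lam Γ x t ht ih =>
    have hx : x ∉ Γ := fun hx => by simpa using List.disjoint_of_nodup_append ht.nodup hx
    have hΓ : (Γ ++ [x]).filter (fun y => y ≠ x) = Γ := by
      rw [List.filter_append, List.filter_eq_self.mpr fun y hy => by
        simpa using fun h : y = x => hx (h ▸ hy)]
      simp
    have hperm := ih.filter (fun y => y ≠ x)
    rw [hΓ] at hperm
    simpa [Term.freeList] using hperm
  | exch _ ih => exact ih.trans (List.Perm.append_left _ (List.Perm.swap _ _ _))

theorem freeList_eq_nil (h : Linear [] t) : t.freeList = [] :=
  List.perm_nil.mp h.freeList_perm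

theorem exists_of_sub? (h : Linear Γ t) {p : List Bool} {u : Term}
    (hp : t.sub? p = some u) : ∃ Δ, Linear Δ u := by
  induction h generalizing p with
  | var x => obtain ⟨-, rfl⟩ := Term.sub?_var hp; exact ⟨_, .var x⟩
  | app ht hu hnd iht ihu =>
    rcases p with _ | ⟨_ | _, p⟩
    · cases (Term.sub?_nil _).symm.trans hp; exact ⟨_, .app ht hu hnd⟩
    · exact iht (by simpa [Term.sub?] using hp)
    · exact ihu (by simpa [Term.sub?] using hp)
  | lam ht ih =>
    rcases p with _ | ⟨_ | _, p⟩
    · cases (Term.sub?_nil _).symm.trans hp; exact ⟨_, .lam ht⟩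
    · exact ih (by simpa [Term.sub?] using hp)
    · simp [Term.sub?] at hp
  | exch _ ih => exact ih hp

theorem mem_freeList_of_lam {z : ℕ} {b : Term} (h : Linear Γ (.lam z b)) : z ∈ b.freeList := by
  generalize hzb : Term.lam z b = s at h
  induction h with
  | var | app => cases hzb
  | lam ht => cases hzb; exact ht.freeList_perm.mem_iff.mpr (by simp)
  | exch _ ih => exact ih hzb

theorem mem_freeList_of_sub?_lam (h : Linear Γ t) {p : List Bool} {z : ℕ} {b : Term}
    (hp : t.sub? p = some (.lam z b)) : z ∈ b.freeList :=
  (h.exists_of_sub? hp).choose_spec.mem_freeList_of_lam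

theorem isFreeOcc_unique (h : Linear Γ t) {y : ℕ} {r₁ r₂ : List Bool}
    (h₁ : t.IsFreeOcc y r₁) (h₂ : t.IsFreeOcc y r₂) : r₁ = r₂ := by
  induction h generalizing r₁ r₂ with
  | var x =>
    rcases r₁ with _ | ⟨_, _⟩ <;> rcases r₂ with _ | ⟨_, _⟩ <;> simp_all
  | app ht hu hnd iht ihu =>
    have hdisj := List.disjoint_of_nodup_append hnd
    have hfree : ∀ {r r'}, Term.IsFreeOcc _ y r → Term.IsFreeOcc _ y r' → False :=
      fun hr hr' => hdisj (ht.freeList_perm.mem_iff.mp (Term.mem_freeList_iff.mpr ⟨_, hr⟩))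
        (hu.freeList_perm.mem_iff.mp (Term.mem_freeList_iff.mpr ⟨_, hr'⟩))
    rcases r₁ with _ | ⟨_ | _, r₁⟩ <;> rcases r₂ with _ | ⟨_ | _, r₂⟩ <;>
      simp only [Term.isFreeOcc_nil, Term.isFreeOcc_app_false, Term.isFreeOcc_app_true,
        reduceCtorEq] at h₁ h₂
    · rw [iht h₁ h₂]
    · exact (hfree h₁ h₂).elim
    · exact (hfree h₂ h₁).elim
    · rw [ihu h₁ h₂]
  | lam _ ih =>
    rcases r₁ with _ | ⟨_ | _, r₁⟩ <;> rcases r₂ with _ | ⟨_ | _, r₂⟩ <;>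
      simp only [Term.isFreeOcc_nil, Term.isFreeOcc_lam_false, Term.isFreeOcc_lam_true,
        reduceCtorEq] at h₁ h₂
    rw [ih h₁.1 h₂.1]
  | exch _ ih => exact ih h₁ h₂

end Linear

namespace Term

theorem binderPos_append_of_isFreeOcc {t u : Term} {P r : List Bool} {y : ℕ}
    (hP : sub? t P = some u) (hf : u.IsFreeOcc y r) :
    binderPos t (P ++ r) = innermostLam t y P := by
  rw [binderPos_eq_innermostLam (by rw [sub?_append_of_eq hP]; exact hf.1),
    innermostLam_append hP, hf.2, Option.map_none, Option.none_or]

theorem exists_of_binderPos_eq_some {t : Term} {q s : List Bool} {y : ℕ}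
    (hq : sub? t q = some (var y)) (hb : binderPos t q = some s) :
    ∃ b r, sub? t s = some (lam y b) ∧ q = s ++ false :: r ∧ b.IsFreeOcc y r := by
  rw [binderPos_eq_innermostLam hq] at hb
  obtain ⟨⟨_ | ⟨c, r⟩, rfl⟩, hlen, b, hs⟩ := innermostLam_eq_some hb
  · simp at hlen
  have hocc : (lam y b).sub? (c :: r) = some (var y) := by rwa [sub?_append_of_eq hs] at hq
  cases c
  · refine ⟨b, r, hs, rfl, by simpa [sub?] using hocc, ?_⟩
    rw [innermostLam_append hs, innermostLam_cons (sub?_lam_body (sub?_nil _))] at hb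
    cases h : innermostLam b y r <;> simp_all
  · simp [sub?] at hocc

theorem binderPos_of_isFreeOcc {t b : Term} {s r : List Bool} {y : ℕ}
    (hs : sub? t s = some (lam y b)) (hf : b.IsFreeOcc y r) :
    sub? t (s ++ false :: r) = some (var y) ∧ binderPos t (s ++ false :: r) = some s := by
  refine ⟨by rw [sub?_append_of_eq hs]; simpa [sub?] using hf.1, ?_⟩
  rw [← List.singleton_append, ← List.append_assoc,
    binderPos_append_of_isFreeOcc (sub?_lam_body hs) hf,
    innermostLam_append hs]
  simp [innermostLam, isLamOf, sub?_nil]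

theorem exists_binderPos_of_closed {t : Term} (h : Linear [] t) {q : List Bool} {y : ℕ}
    (hq : sub? t q = some (var y)) : ∃ s, binderPos t q = some s := by
  rw [binderPos_eq_innermostLam hq, ← Option.isSome_iff_exists, Option.isSome_iff_ne_none]
  intro hnone
  simpa [h.freeList_eq_nil] using mem_freeList_iff.mpr ⟨q, hq, hnone⟩

theorem exists_binderPos_eq_append_of_closed {t u : Term} {P r : List Bool} {y : ℕ}
    (hP : sub? t P = some u) (hu : u.freeList = []) (hq : sub? t (P ++ r) = some (var y)) :
    ∃ s, binderPos t (P ++ r) = some (P ++ s) := by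
  rw [sub?_append_of_eq hP] at hq
  cases hs : innermostLam u y r with
  | none => simpa [hu] using mem_freeList_iff.mpr ⟨r, hq, hs⟩
  | some s =>
    refine ⟨s, ?_⟩
    rw [binderPos_eq_innermostLam (by rwa [sub?_append_of_eq hP]), innermostLam_append hP, hs]
    rfl

theorem occOf_eq {Γ : List ℕ} {t : Term} (h : Linear Γ t) {s q : List Bool} {z : ℕ} {b : Term}
    (hs : sub? t s = some (lam z b)) (hq : sub? t q = some (var z))
    (hb : binderPos t q = some s) : occOf t s z = some q := by
  have hbody : ∃ Δ, Linear Δ b := h.exists_of_sub? (sub?_lam_body hs)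
  have huniq : ∀ q', sub? t q' = some (var z) → binderPos t q' = some s → q' = q := by
    intro q' h₁ h₂
    obtain ⟨b₁, r₁, hs₁, rfl, hf₁⟩ := exists_of_binderPos_eq_some h₁ h₂
    obtain ⟨b₂, r₂, hs₂, rfl, hf₂⟩ := exists_of_binderPos_eq_some hq hb
    obtain rfl : b₁ = b := by simp_all
    obtain rfl : b₂ = b₁ := by simp_all
    rw [hbody.choose_spec.isFreeOcc_unique hf₁ hf₂]
  unfold occOf
  cases hfind : (allPos t).find?
      (fun q' => decide (sub? t q' = some (var z) ∧ binderPos t q' = some s)) with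
  | some q' =>
    have hq' := List.find?_some hfind
    simp only [decide_eq_true_eq] at hq'
    rw [huniq q' hq'.1 hq'.2]
  | none =>
    simpa [hq, hb] using List.find?_eq_none.mp hfind q (mem_allPos.mpr ⟨_, hq⟩)

theorem exists_occ_of_lam {Γ : List ℕ} {t : Term} (h : Linear Γ t) {s : List Bool} {z : ℕ}
    {b : Term} (hs : sub? t s = some (lam z b)) :
    ∃ q, sub? t q = some (var z) ∧ binderPos t q = some s :=
  let ⟨_, hf⟩ := mem_freeList_iff.mp (h.mem_freeList_of_sub?_lam hs)
  ⟨_, binderPos_of_isFreeOcc hs hf⟩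

theorem dnIdx_concat {t u : Term} {q : List Bool} {d : Bool} (h : sub? t (q ++ [d]) = some u) :
    dnIdx t (q ++ [d]) = 1 + 3 * (nodes t).idxOf q + d.toNat := by
  rcases parent_of_sub?_concat h with ⟨a, b, hq⟩ | ⟨z, hq, rfl⟩
  · cases d <;> simp [dnIdx, hq]
  · simp [dnIdx, hq]

theorem topIdx_of_node {t u : Term} {p : List Bool} (hp : sub? t p = some u)
    (hu : ∀ y, u ≠ var y) : topIdx t p = 1 + 3 * (nodes t).idxOf p + 2 := by
  cases u with
  | var y => exact absurd rfl (hu y)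
  | _ => simp only [topIdx, hp]

theorem topIdx_of_var {t : Term} {p s : List Bool} {y : ℕ} (hp : sub? t p = some (var y))
    (hb : binderPos t p = some s) : topIdx t p = 1 + 3 * (nodes t).idxOf s + 1 := by
  simp only [topIdx, hp, hb]

theorem eIdx_port {t : Term} {q : List Bool} (hq : q ∈ nodes t) {i : ℕ} (hi : i < 3) :
    eIdx t (1 + 3 * (nodes t).idxOf q + i) =
      match sub? t q with
      | some (app _ _) =>
          if i = 0 then topIdx t (q ++ [false])
          else if i = 1 then topIdx t (q ++ [true])
          else dnIdx t q
      | some (lam x _) =>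
          if i = 0 then topIdx t (q ++ [false])
          else if i = 1 then
            match occOf t q x with
            | some o => dnIdx t o
            | none => 1 + 3 * (nodes t).idxOf q + i
          else dnIdx t q
      | _ => 1 + 3 * (nodes t).idxOf q + i := by
  have hj : (1 + 3 * (nodes t).idxOf q + i - 1) / 3 = (nodes t).idxOf q := by omega
  have hi' : (1 + 3 * (nodes t).idxOf q + i - 1) % 3 = i := by omega
  simp only [eIdx, hj, hi', List.getElem?_idxOf hq, Nat.add_eq_zero_iff, one_ne_zero,
    false_and, if_false]

theorem eIdx_dnIdx {t u : Term} {p : List Bool} (hp : sub? t p = some u) :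
    eIdx t (dnIdx t p) = topIdx t p := by
  rcases List.eq_nil_or_concat' p with rfl | ⟨q, d, rfl⟩
  · rfl
  rw [dnIdx_concat hp, eIdx_port (parent_mem_nodes hp) (by cases d <;> simp)]
  rcases parent_of_sub?_concat hp with ⟨a, b, hq⟩ | ⟨z, hq, rfl⟩
  · cases d <;> simp [hq]
  · simp [hq]

theorem eIdx_topIdx {t u : Term} (h : Linear [] t) {p : List Bool} (hp : sub? t p = some u) :
    eIdx t (topIdx t p) = dnIdx t p := by
  cases u with
  | var y =>
    obtain ⟨s, hb⟩ := exists_binderPos_of_closed h hp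
    obtain ⟨b, -, hs, -⟩ := exists_of_binderPos_eq_some hp hb
    rw [topIdx_of_var hp hb, eIdx_port (mem_nodes.mpr ⟨_, hs, by simp⟩) (by omega), hs]
    simp [occOf_eq h hs hp hb]
  | _ =>
    rw [topIdx_of_node hp (by simp), eIdx_port (mem_nodes.mpr ⟨_, hp, by simp⟩) (by omega), hp]
    simp

theorem dnIdx_lt {t : Term} {p : List Bool} {u : Term} (hp : sub? t p = some u) :
    dnIdx t p < 3 * (nodes t).length + 1 := by
  rcases List.eq_nil_or_concat' p with rfl | ⟨q, d, rfl⟩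
  · simp [dnIdx]
  · have := List.idxOf_lt_length_iff.mpr (parent_mem_nodes hp)
    rw [dnIdx_concat hp]
    cases d <;> simp <;> omega

theorem topIdx_lt {t : Term} (h : Linear [] t) {p : List Bool} {u : Term} (hp : sub? t p = some u) :
    topIdx t p < 3 * (nodes t).length + 1 := by
  cases u with
  | var y =>
    obtain ⟨s, hb⟩ := exists_binderPos_of_closed h hp
    obtain ⟨b, -, hs, -⟩ := exists_of_binderPos_eq_some hp hb
    have := List.idxOf_lt_length_iff.mpr (mem_nodes.mpr ⟨_, hs, by simp⟩)
    rw [topIdx_of_var hp hb]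
    omega
  | _ =>
    have := List.idxOf_lt_length_iff.mpr (mem_nodes.mpr ⟨_, hp, by simp⟩)
    rw [topIdx_of_node hp (by simp)]
    omega

end Term

open Term

def portDart (T : Term) (q : List Bool) (i : ℕ) : (underlying [] T).carrier :=
  ⟨(1 + 3 * (nodes T).idxOf q + i) % (3 * (nodes T).length + 1), Nat.mod_lt _ (by omega)⟩

def topDart (T : Term) (p : List Bool) : (underlying [] T).carrier :=
  ⟨topIdx T p % (3 * (nodes T).length + 1), Nat.mod_lt _ (by omega)⟩

section Darts

variable {T : Term}

theorem portDart_val {q : List Bool} (hq : q ∈ nodes T) {i : ℕ} (hi : i < 3) :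
    (portDart T q i).val = 1 + 3 * (nodes T).idxOf q + i :=
  Nat.mod_eq_of_lt (by have := List.idxOf_lt_length_iff.mpr hq; omega)

theorem portDart_inj {q₁ q₂ : List Bool} {i₁ i₂ : ℕ} (hq₁ : q₁ ∈ nodes T) (hq₂ : q₂ ∈ nodes T)
    (hi₁ : i₁ < 3) (hi₂ : i₂ < 3) : portDart T q₁ i₁ = portDart T q₂ i₂ ↔ q₁ = q₂ ∧ i₁ = i₂ := by
  refine ⟨fun h => ?_, by rintro ⟨rfl, rfl⟩; rfl⟩
  have h := congrArg Fin.val h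
  rw [portDart_val hq₁ hi₁, portDart_val hq₂ hi₂] at h
  exact ⟨(List.idxOf_inj hq₁).mp (by omega), by omega⟩

theorem portDart_ne_root {q : List Bool} (hq : q ∈ nodes T) {i : ℕ} (hi : i < 3) :
    portDart T q i ≠ (underlying [] T).root :=
  fun h => by
    have h := congrArg Fin.val h
    rw [portDart_val hq hi] at h
    exact absurd h (by change _ ≠ 0; omega)

theorem dartOf_nil : dartOf [] T [] = (underlying [] T).root := rfl

theorem dartOf_concat {q : List Bool} {d : Bool} {u : Term} (h : sub? T (q ++ [d]) = some u) :
    dartOf [] T (q ++ [d]) = portDart T q d.toNat :=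
  Fin.ext (congrArg (· % _) (dnIdx_concat h))

theorem topDart_of_node {p : List Bool} {u : Term} (hp : sub? T p = some u)
    (hu : ∀ y, u ≠ var y) : topDart T p = portDart T p 2 :=
  Fin.ext (congrArg (· % _) (topIdx_of_node hp hu))

theorem topDart_of_var {p s : List Bool} {y : ℕ} (hp : sub? T p = some (var y))
    (hb : binderPos T p = some s) : topDart T p = portDart T s 1 :=
  Fin.ext (congrArg (· % _) (topIdx_of_var hp hb))

theorem e_dartOf {p : List Bool} {u : Term} (hp : sub? T p = some u) :
    (underlying [] T).e (dartOf [] T p) = topDart T p := by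
  apply Fin.ext
  change eIdx T (dnIdx T p % _) % _ = topIdx T p % _
  rw [Nat.mod_eq_of_lt (dnIdx_lt hp), eIdx_dnIdx hp]

theorem e_topDart (hT : Linear [] T) {p : List Bool} {u : Term} (hp : sub? T p = some u) :
    (underlying [] T).e (topDart T p) = dartOf [] T p := by
  apply Fin.ext
  change eIdx T (topIdx T p % _) % _ = dnIdx T p % _
  rw [Nat.mod_eq_of_lt (topIdx_lt hT hp), eIdx_topIdx hT hp]

theorem v_portDart {q : List Bool} (hq : q ∈ nodes T) {i : ℕ} (hi : i < 3) :
    (underlying [] T).v (portDart T q i) = portDart T q ((i + 2) % 3) := by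
  have hval := portDart_val hq hi
  apply Fin.ext
  simp only [underlying, hval, Nat.add_eq_zero_iff, one_ne_zero, false_and, ↓reduceIte]
  simp only [portDart]
  congr 1
  omega

theorem eq_root_or_portDart (a : (underlying [] T).carrier) :
    a = (underlying [] T).root ∨ ∃ q ∈ nodes T, ∃ i < 3, a = portDart T q i := by
  rcases Nat.eq_zero_or_pos a.val with h | h
  · exact Or.inl (Fin.ext h)
  · have hj : (a.val - 1) / 3 < (nodes T).length := by have := a.isLt; omega
    have hmem := List.getElem_mem hj
    refine Or.inr ⟨_, hmem, (a.val - 1) % 3, Nat.mod_lt _ (by omega), Fin.ext ?_⟩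
    rw [portDart_val hmem (Nat.mod_lt _ (by omega)), (nodes_nodup T).idxOf_getElem]
    omega

theorem exists_eq_dartOf_or_eq_topDart (hT : Linear [] T) (a : (underlying [] T).carrier) :
    ∃ p u, sub? T p = some u ∧ (a = dartOf [] T p ∨ a = topDart T p) := by
  rcases eq_root_or_portDart a with rfl | ⟨q, hq, i, hi, rfl⟩
  · exact ⟨[], T, sub?_nil T, Or.inl dartOf_nil.symm⟩
  obtain ⟨u, hqu, hu⟩ := mem_nodes.mp hq
  interval_cases i
  · cases u with
    | var y => exact absurd rfl (hu y)
    | app a b => exact ⟨_, a, sub?_app_left hqu, Or.inl (dartOf_concat (sub?_app_left hqu)).symm⟩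
    | lam z b => exact ⟨_, b, sub?_lam_body hqu, Or.inl (dartOf_concat (sub?_lam_body hqu)).symm⟩
  · cases u with
    | var y => exact absurd rfl (hu y)
    | app a b => exact ⟨_, b, sub?_app_right hqu, Or.inl (dartOf_concat (sub?_app_right hqu)).symm⟩
    | lam z b =>
      obtain ⟨o, ho, hb⟩ := exists_occ_of_lam hT hqu
      exact ⟨o, _, ho, Or.inr (topDart_of_var ho hb).symm⟩
  · exact ⟨q, u, hqu, Or.inr (topDart_of_node hqu hu).symm⟩

theorem dartOf_inj {p₁ p₂ : List Bool} {u₁ u₂ : Term} (h₁ : sub? T p₁ = some u₁)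
    (h₂ : sub? T p₂ = some u₂) (h : dartOf [] T p₁ = dartOf [] T p₂) : p₁ = p₂ := by
  rcases List.eq_nil_or_concat' p₁ with rfl | ⟨q₁, d₁, rfl⟩ <;>
    rcases List.eq_nil_or_concat' p₂ with rfl | ⟨q₂, d₂, rfl⟩
  · rfl
  · rw [dartOf_concat h₂] at h
    exact absurd h.symm (portDart_ne_root (parent_mem_nodes h₂) (by cases d₂ <;> simp))
  · rw [dartOf_concat h₁] at h
    exact absurd h (portDart_ne_root (parent_mem_nodes h₁) (by cases d₁ <;> simp))
  · rw [dartOf_concat h₁, dartOf_concat h₂, portDart_inj (parent_mem_nodes h₁)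
      (parent_mem_nodes h₂) (by cases d₁ <;> simp) (by cases d₂ <;> simp)] at h
    obtain ⟨rfl, hd⟩ := h
    cases d₁ <;> cases d₂ <;> simp_all

/-- a lower end is the root or port `0` or `1` of its parent, an upper end is port `2` of a node
or the parameter port of an abstraction -/
theorem dartOf_ne_topDart (hT : Linear [] T) {p₁ p₂ : List Bool} {u₁ u₂ : Term}
    (h₁ : sub? T p₁ = some u₁) (h₂ : sub? T p₂ = some u₂) : dartOf [] T p₁ ≠ topDart T p₂ := by
  rcases List.eq_nil_or_concat' p₁ with rfl | ⟨q₁, d₁, rfl⟩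
  · rw [dartOf_nil]
    cases u₂ with
    | var y =>
      obtain ⟨s, hb⟩ := exists_binderPos_of_closed hT h₂
      obtain ⟨b, -, hs, -⟩ := exists_of_binderPos_eq_some h₂ hb
      rw [topDart_of_var h₂ hb]
      exact (portDart_ne_root (mem_nodes.mpr ⟨_, hs, by simp⟩) (by omega)).symm
    | _ =>
      rw [topDart_of_node h₂ (by simp)]
      exact (portDart_ne_root (mem_nodes.mpr ⟨_, h₂, by simp⟩) (by omega)).symm
  have hq₁ := parent_mem_nodes h₁
  have hd₁ : d₁.toNat < 2 := by cases d₁ <;> simp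
  rw [dartOf_concat h₁]
  cases u₂ with
  | var y =>
    obtain ⟨s, hb⟩ := exists_binderPos_of_closed hT h₂
    obtain ⟨b, -, hs, -⟩ := exists_of_binderPos_eq_some h₂ hb
    rw [topDart_of_var h₂ hb, Ne, portDart_inj hq₁ (mem_nodes.mpr ⟨_, hs, by simp⟩)
      (by omega) (by omega)]
    rintro ⟨rfl, hd⟩
    rcases parent_of_sub?_concat h₁ with ⟨a, b', hq⟩ | ⟨z', -, rfl⟩
    · simp [hs] at hq
    · simp at hd
  | _ =>
    rw [topDart_of_node h₂ (by simp), Ne, portDart_inj hq₁ (mem_nodes.mpr ⟨_, h₂, by simp⟩)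
      (by omega) (by omega)]
    omega

end Darts

namespace EdgeConn

variable {M : PreMap} {x a b c : M.carrier}

theorem refl (a : M.carrier) : EdgeConn M x a a := Relation.EqvGen.refl a

theorem symm (h : EdgeConn M x a b) : EdgeConn M x b a := Relation.EqvGen.symm a b h

theorem trans (h₁ : EdgeConn M x a b) (h₂ : EdgeConn M x b c) : EdgeConn M x a c :=
  Relation.EqvGen.trans a b c h₁ h₂

theorem v_step (a : M.carrier) : EdgeConn M x a (M.v a) := Relation.EqvGen.rel _ _ (Or.inl rfl)

theorem e_step (h₁ : a ≠ x) (h₂ : a ≠ M.e x) : EdgeConn M x a (M.e a) :=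
  Relation.EqvGen.rel _ _ (Or.inr ⟨rfl, h₁, h₂⟩)

theorem mem_iff_of_invariant (S : Set M.carrier) (hv : ∀ a, M.v a ∈ S ↔ a ∈ S)
    (he : ∀ a, a ≠ x → a ≠ M.e x → (M.e a ∈ S ↔ a ∈ S)) (h : EdgeConn M x a b) :
    a ∈ S ↔ b ∈ S := by
  induction h with
  | rel a b hab =>
    rcases hab with rfl | ⟨rfl, h₁, h₂⟩
    · exact (hv a).symm
    · exact (he a h₁ h₂).symm
  | refl => rfl
  | symm _ _ _ ih => exact ih.symm
  | trans _ _ _ _ _ ih₁ ih₂ => exact ih₁.trans ih₂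

end EdgeConn

theorem edgeConn_port {T : Term} (x : (underlying [] T).carrier) {q : List Bool}
    (hq : q ∈ nodes T) {i i' : ℕ} (hi : i < 3) (hi' : i' < 3) :
    EdgeConn (underlying [] T) x (portDart T q i) (portDart T q i') := by
  have hv : ∀ i < 3, EdgeConn (underlying [] T) x (portDart T q i) (portDart T q ((i + 2) % 3)) :=
    fun i hi => v_portDart hq hi ▸ EdgeConn.v_step _
  have h0 : ∀ i < 3, EdgeConn (underlying [] T) x (portDart T q i) (portDart T q 0) := by
    intro i hi
    interval_cases i
    exacts [EdgeConn.refl _, hv 1 (by omega), (hv 2 (by omega)).trans (hv 1 (by omega))]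
  exact (h0 i hi).trans (h0 i' hi').symm

section Connectivity

variable {T : Term} (hT : Linear [] T) {P : List Bool} {uP : Term} (hP : sub? T P = some uP)
  {x : (underlying [] T).carrier} (hx : x = dartOf [] T P ∨ x = topDart T P)
include hT hP hx

theorem edgeConn_wire {p : List Bool} {u : Term} (hp : sub? T p = some u) (hne : p ≠ P) :
    EdgeConn (underlying [] T) x (dartOf [] T p) (topDart T p) := by
  have hex : (underlying [] T).e x = dartOf [] T P ∨ (underlying [] T).e x = topDart T P := by
    rcases hx with rfl | rfl
    exacts [Or.inr (e_dartOf hP), Or.inl (e_topDart hT hP)]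
  have hfar : ∀ a, a = dartOf [] T P ∨ a = topDart T P → dartOf [] T p ≠ a := by
    rintro a (rfl | rfl)
    exacts [fun h => hne (dartOf_inj hp hP h), dartOf_ne_topDart hT hp hP]
  exact e_dartOf hp ▸ EdgeConn.e_step (hfar x hx) (hfar _ hex)

theorem edgeConn_parent {q : List Bool} {d : Bool} {u : Term} (hp : sub? T (q ++ [d]) = some u)
    (hu : ∀ y, u ≠ var y) (hne : q ++ [d] ≠ P) :
    EdgeConn (underlying [] T) x (portDart T (q ++ [d]) 2) (portDart T q 2) := by
  rw [← topDart_of_node hp hu]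
  refine (edgeConn_wire hT hP hx hp hne).symm.trans ?_
  rw [dartOf_concat hp]
  exact edgeConn_port x (parent_mem_nodes hp) (by cases d <;> simp) (by omega)

/-- none of the wires crossed is the wire of `P`, since `P` is no deeper than `p` -/
theorem edgeConn_descend {p q : List Bool} (hp : p ∈ nodes T) (hq : q ∈ nodes T) (hpq : p <+: q)
    (hlen : P.length ≤ p.length) :
    EdgeConn (underlying [] T) x (portDart T q 2) (portDart T p 2) := by
  induction q using List.reverseRecOn with
  | nil => rw [List.prefix_nil.mp hpq]; exact EdgeConn.refl _
  | append_singleton q d ih =>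
    rcases List.prefix_concat_iff.mp hpq with rfl | hpq
    · exact EdgeConn.refl _
    obtain ⟨u, hqu, hu⟩ := mem_nodes.mp hq
    have hne : q ++ [d] ≠ P := fun h => by
      have := congrArg List.length h
      have := hpq.length_le
      simp at *; omega
    exact (edgeConn_parent hT hP hx hqu hu hne).trans (ih (parent_mem_nodes hqu) hpq)

/-- descend to a free variable of the subterm at `P` and follow its wire up to its binder,
which lies strictly above `P` -/
theorem edgeConn_bypass (hPnode : P ∈ nodes T) (hopen : uP.freeList ≠ []) :
    ∃ s ∈ nodes T, s.length < P.length ∧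
      EdgeConn (underlying [] T) x (portDart T P 2) (portDart T s 2) := by
  obtain ⟨y, hy⟩ := List.exists_mem_of_ne_nil _ hopen
  obtain ⟨r, hf⟩ := mem_freeList_iff.mp hy
  have hocc : sub? T (P ++ r) = some (var y) := by rw [sub?_append_of_eq hP]; exact hf.1
  obtain ⟨s, hb⟩ := exists_binderPos_of_closed hT hocc
  obtain ⟨-, hslen, b, hs⟩ := innermostLam_eq_some (binderPos_append_of_isFreeOcc hP hf ▸ hb)
  have hsnode : s ∈ nodes T := mem_nodes.mpr ⟨_, hs, by simp⟩
  refine ⟨s, hsnode, hslen, ?_⟩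
  rcases List.eq_nil_or_concat' r with rfl | ⟨r, c, rfl⟩
  · obtain ⟨w, hw, hwnode⟩ := mem_nodes.mp hPnode
    obtain rfl : w = uP := Option.some.inj (hw.symm.trans hP)
    rw [List.append_nil, hP] at hocc
    exact (hwnode y (Option.some.inj hocc)).elim
  rw [← List.append_assoc] at hocc hb
  have hne : P ++ r ++ [c] ≠ P := fun h => by simpa using congrArg List.length h
  have hparent := parent_mem_nodes hocc
  have hdown : EdgeConn (underlying [] T) x (portDart T P 2) (portDart T (P ++ r) 2) :=
    (edgeConn_descend hT hP hx hPnode hparent (List.prefix_append P r) le_rfl).symm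
  have hvar : EdgeConn (underlying [] T) x (portDart T (P ++ r) c.toNat) (portDart T s 1) := by
    rw [← dartOf_concat hocc, ← topDart_of_var hocc hb]
    exact edgeConn_wire hT hP hx hocc hne
  exact hdown.trans <| (edgeConn_port x hparent (by omega) (by cases c <;> simp)).trans <|
    hvar.trans (edgeConn_port x hsnode (by omega) (by omega))

theorem edgeConn_root_of_open (hopen : uP.freeList ≠ []) {q : List Bool}
    (hq : q ∈ nodes T) : EdgeConn (underlying [] T) x (portDart T q 2) (underlying [] T).root := by
  induction hn : q.length using Nat.strong_induction_on generalizing q with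
  | _ n ih =>
    by_cases hqP : q = P
    · obtain rfl := hqP
      obtain ⟨s, hs, hslen, hbypass⟩ := edgeConn_bypass hT hP hx hq hopen
      exact hbypass.trans (ih _ (hn ▸ hslen) hs rfl)
    obtain ⟨u, hqu, hu⟩ := mem_nodes.mp hq
    rcases List.eq_nil_or_concat' q with rfl | ⟨q, d, rfl⟩
    · rw [← topDart_of_node hqu hu]
      exact (edgeConn_wire hT hP hx hqu hqP).symm
    · exact (edgeConn_parent hT hP hx hqu hu hqP).trans
        (ih _ (by simp [← hn]) (parent_mem_nodes hqu) rfl)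

theorem edgeConn_of_open (hopen : uP.freeList ≠ [])
    (a b : (underlying [] T).carrier) : EdgeConn (underlying [] T) x a b := by
  have hroot : ∀ a, EdgeConn (underlying [] T) x a (underlying [] T).root := by
    intro a
    rcases eq_root_or_portDart a with rfl | ⟨q, hq, i, hi, rfl⟩
    · exact EdgeConn.refl _
    · exact (edgeConn_port x hq hi (by omega)).trans
        (edgeConn_root_of_open hT hP hx hopen hq)
  exact (hroot a).trans (hroot b).symm

end Connectivity

def subtreeDarts (T : Term) (P : List Bool) : Set (underlying [] T).carrier :=
  {a | ∃ q ∈ nodes T, P <+: q ∧ ∃ i < 3, a = portDart T q i}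

section Separation

variable {T : Term} {P : List Bool}

theorem portDart_mem_subtreeDarts {q : List Bool} (hq : q ∈ nodes T) {i : ℕ} (hi : i < 3) :
    portDart T q i ∈ subtreeDarts T P ↔ P <+: q := by
  refine ⟨fun ⟨q', hq', hPq', i', hi', h⟩ => ?_, fun h => ⟨q, hq, h, i, hi, rfl⟩⟩
  rwa [((portDart_inj hq hq' hi hi').mp h).1]

theorem root_not_mem_subtreeDarts : (underlying [] T).root ∉ subtreeDarts T P :=
  fun ⟨_, hq, _, _, hi, h⟩ => portDart_ne_root hq hi h.symm

theorem v_mem_subtreeDarts_iff (a : (underlying [] T).carrier) :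
    (underlying [] T).v a ∈ subtreeDarts T P ↔ a ∈ subtreeDarts T P := by
  rcases eq_root_or_portDart a with rfl | ⟨q, hq, i, hi, rfl⟩
  · rfl
  · rw [v_portDart hq hi, portDart_mem_subtreeDarts hq hi,
      portDart_mem_subtreeDarts hq (Nat.mod_lt _ (by omega))]

/-- a variable occurring inside the closed subterm at `P` is bound inside it -/
theorem topDart_mem_subtreeDarts_iff (hT : Linear [] T) {uP : Term} (hP : sub? T P = some uP)
    (hclosed : uP.freeList = []) {p : List Bool} {u : Term} (hp : sub? T p = some u)
    (hne : p ≠ P) : topDart T p ∈ subtreeDarts T P ↔ dartOf [] T p ∈ subtreeDarts T P := by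
  rcases List.eq_nil_or_concat' p with rfl | ⟨q, d, rfl⟩
  · obtain rfl : u = T := Option.some.inj (hp.symm.trans (sub?_nil T))
    have hu : ∀ y, u ≠ var y := by
      rintro y rfl
      simpa [freeList] using hT.freeList_eq_nil
    rw [topDart_of_node hp hu, portDart_mem_subtreeDarts (mem_nodes.mpr ⟨_, hp, hu⟩) (by omega),
      List.prefix_nil, dartOf_nil]
    exact iff_of_false (Ne.symm hne) root_not_mem_subtreeDarts
  rw [dartOf_concat hp, portDart_mem_subtreeDarts (parent_mem_nodes hp) (by cases d <;> simp)]
  cases u with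
  | var y =>
    obtain ⟨s, hb⟩ := exists_binderPos_of_closed hT hp
    obtain ⟨b, r, hs, hsr, -⟩ := exists_of_binderPos_eq_some hp hb
    rw [topDart_of_var hp hb, portDart_mem_subtreeDarts (mem_nodes.mpr ⟨_, hs, by simp⟩)
      (by omega)]
    constructor
    · intro hPs
      refine hPs.trans ?_
      have : s <+: q ++ [d] := hsr ▸ List.prefix_append s _
      refine (List.prefix_concat_iff.mp this).resolve_left fun h => ?_
      simpa [h] using congrArg List.length hsr
    · rintro ⟨r', rfl⟩
      obtain ⟨s', hs'⟩ :=
        exists_binderPos_eq_append_of_closed hP hclosed (r := r' ++ [d]) (by simpa using hp)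
      rw [← List.append_assoc, hb] at hs'
      exact ⟨s', (Option.some.inj hs').symm⟩
  | _ =>
    rw [topDart_of_node hp (by simp), portDart_mem_subtreeDarts (mem_nodes.mpr ⟨_, hp, by simp⟩)
      (by omega), List.prefix_concat_iff, or_iff_right (Ne.symm hne)]

theorem isBridge_of_closed (hT : Linear [] T) {uP : Term} (hP : sub? T P = some uP)
    (hPne : P ≠ []) (hclosed : uP.freeList = []) :
    IsBridge (underlying [] T) (dartOf [] T P) := by
  refine ⟨e_dartOf hP ▸ (dartOf_ne_topDart hT hP hP).symm,
    fun h => hPne (dartOf_inj hP (sub?_nil T) h), ?_, fun hconn => ?_⟩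
  · rw [← dartOf_nil, e_dartOf (sub?_nil T)]
    exact dartOf_ne_topDart hT hP (sub?_nil T)
  have he : ∀ a, a ≠ dartOf [] T P → a ≠ (underlying [] T).e (dartOf [] T P) →
      ((underlying [] T).e a ∈ subtreeDarts T P ↔ a ∈ subtreeDarts T P) := by
    intro a ha₁ ha₂
    rw [e_dartOf hP] at ha₂
    obtain ⟨p, u, hp, rfl | rfl⟩ := exists_eq_dartOf_or_eq_topDart hT a
    · rw [e_dartOf hp]
      exact topDart_mem_subtreeDarts_iff hT hP hclosed hp (fun h => ha₁ (h ▸ rfl))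
    · rw [e_topDart hT hp]
      exact (topDart_mem_subtreeDarts_iff hT hP hclosed hp (fun h => ha₂ (h ▸ rfl))).symm
  have huP : ∀ y, uP ≠ var y := by rintro y rfl; simp [freeList] at hclosed
  have htop : topDart T P ∈ subtreeDarts T P := by
    rw [topDart_of_node hP huP, portDart_mem_subtreeDarts (mem_nodes.mpr ⟨_, hP, huP⟩) (by omega)]
  exact root_not_mem_subtreeDarts ((EdgeConn.mem_iff_of_invariant _ v_mem_subtreeDarts_iff he
    (hconn (topDart T P) (underlying [] T).root)).mp htop)

end Separation

theorem linear_lambdaLift {Γ : List ℕ} {t : Term} (h : Linear Γ t) :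
    Linear [] (lambdaLift Γ t) := by
  induction Γ using List.reverseRecOn generalizing t with
  | nil => exact h
  | append_singleton Γ x ih =>
    rw [lambdaLift, List.foldr_append]
    exact ih (Linear.lam h)

theorem sub?_lambdaLift_append (Γ : List ℕ) (t : Term) (q : List Bool) :
    sub? (lambdaLift Γ t) (List.replicate Γ.length false ++ q) = sub? t q := by
  induction Γ with
  | nil => rfl
  | cons x Γ ih => simpa [lambdaLift, List.replicate_succ, sub?] using ih

theorem exists_of_sub?_lambdaLift_eq_app {Γ : List ℕ} {t a b : Term} {Q : List Bool}
    (h : sub? (lambdaLift Γ t) Q = some (app a b)) :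
    ∃ q, Q = List.replicate Γ.length false ++ q := by
  induction Γ generalizing Q with
  | nil => exact ⟨Q, rfl⟩
  | cons x Γ ih =>
    rcases Q with _ | ⟨_ | _, Q⟩
    · simp [sub?_nil, lambdaLift] at h
    · obtain ⟨q, rfl⟩ := ih (by simpa [lambdaLift, sub?] using h)
      exact ⟨q, rfl⟩
    · simp [lambdaLift, sub?] at h

/-- Let `(Γ, t)` be a linear lambda term and let `u` be a subterm occurrence
of `t` that is the function or the argument of an application occurring in
`t`.  Then the edge corresponding to `u` in the underlying rooted trivalent
map of the lambda lifting of `(Γ, t)` is a bridge if and only if `u` is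
closed.  Moreover, every bridge of that map arises in this way. -/
theorem bridges_correspond_to_closed_subterms :
    ∀ (Γ : List ℕ) (t : Term), Linear Γ t →
      (∀ (q : List Bool) (d : Bool) (t₁ t₂ u : Term),
        Term.sub? t q = some (.app t₁ t₂) →
        Term.sub? t (q ++ [d]) = some u →
        (IsBridge (underlying [] (lambdaLift Γ t))
            (dartOf [] (lambdaLift Γ t)
              (List.replicate Γ.length false ++ (q ++ [d]))) ↔
         u.freeList = [])) ∧
      (∀ x : (underlying [] (lambdaLift Γ t)).carrier,
        IsBridge (underlying [] (lambdaLift Γ t)) x →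
        ∃ (q : List Bool) (d : Bool) (t₁ t₂ u : Term),
          Term.sub? t q = some (.app t₁ t₂) ∧
          Term.sub? t (q ++ [d]) = some u ∧
          (x = dartOf [] (lambdaLift Γ t)
                 (List.replicate Γ.length false ++ (q ++ [d])) ∨
           x = (underlying [] (lambdaLift Γ t)).e
                 (dartOf [] (lambdaLift Γ t)
                   (List.replicate Γ.length false ++ (q ++ [d]))))) := by
  intro Γ t ht
  have hT := linear_lambdaLift ht
  refine ⟨fun q d t₁ t₂ u _ hu => ?_, fun x hx => ?_⟩
  · rw [← sub?_lambdaLift_append Γ] at hu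
    refine ⟨fun hbridge => ?_, isBridge_of_closed hT hu (by simp)⟩
    by_contra hopen
    exact hbridge.2.2.2 (edgeConn_of_open hT hu (Or.inl rfl) hopen)
  obtain ⟨-, hroot, heroot, hdisc⟩ := hx
  obtain ⟨p, u, hp, hxp⟩ := exists_eq_dartOf_or_eq_topDart hT x
  rcases List.eq_nil_or_concat' p with rfl | ⟨Q, d, rfl⟩
  · rw [← e_dartOf hp, dartOf_nil] at hxp
    exact (hxp.elim hroot heroot).elim
  rcases parent_of_sub?_concat hp with ⟨a, b, hQ⟩ | ⟨z, hQ, rfl⟩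
  · obtain ⟨q, rfl⟩ := exists_of_sub?_lambdaLift_eq_app hQ
    rw [List.append_assoc] at hp hxp
    rw [← e_dartOf hp] at hxp
    rw [sub?_lambdaLift_append] at hp hQ
    exact ⟨q, d, a, b, u, hQ, hp, hxp⟩
  · exact (hdisc (edgeConn_of_open hT hp hxp
      (List.ne_nil_of_mem (hT.mem_freeList_of_sub?_lam hQ)))).elim
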